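/- Let A be a unital complex C*-algebra, let γ ∈ A be a selfadjoint unitary (γ* = γ, γ² = 1), and let F ∈ A be selfadjoint with ‖F‖ ≤ 1 and γ·F = −F·γ. Let s := (1 − F²)^{1/2} denote the positive square root of the positive element 1 − F². Then U := F + γ·s is a selfadjoint unitary (U* = U and U² = 1), and U·((1 + γ)/2)·U = γ·(1 − F²) + F·s + (1 − γ)/2; in particular the right-hand side is a projection. -/
import Mathlib


/-- **the projection `Q_F = U_F·γ₊·U_F`.** Let `γ` be a selfadjoint unitary and
`F` a selfadjoint contraction anticommuting with `γ` in a unital complex C*-algebra. With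
`s = (1 − F²)^{1/2}`, the element `U = F + γ·s` is a selfadjoint unitary and
`U·((1+γ)/2)·U = γ·(1 − F²) + F·s + (1−γ)/2`; in particular the right-hand side is a
projection. -/
theorem selfadjoint_unitary_conj_grading
    {A : Type*} [CStarAlgebra A] [PartialOrder A] [StarOrderedRing A]
    (γ F : A) (hγ : IsSelfAdjoint γ) (hγ2 : γ ^ 2 = 1)
    (hF : IsSelfAdjoint F) (hFnorm : ‖F‖ ≤ 1) (hanti : γ * F = -(F * γ))
    (s : A) (hs : s = CFC.sqrt (1 - F ^ 2)) :
    0 ≤ 1 - F ^ 2 ∧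
    IsSelfAdjoint (F + γ * s) ∧ (F + γ * s) ^ 2 = 1 ∧
    (F + γ * s) * ((2:ℝ)⁻¹ • (1 + γ)) * (F + γ * s)
      = γ * (1 - F ^ 2) + F * s + (2:ℝ)⁻¹ • (1 - γ) ∧
    IsSelfAdjoint (γ * (1 - F ^ 2) + F * s + (2:ℝ)⁻¹ • (1 - γ)) ∧
    IsIdempotentElem (γ * (1 - F ^ 2) + F * s + (2:ℝ)⁻¹ • (1 - γ)) := by
  rcases subsingleton_or_nontrivial A with hA | hA
  · exact ⟨le_of_eq (Subsingleton.elim _ _), Subsingleton.elim _ _, Subsingleton.elim _ _,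
      Subsingleton.elim _ _, Subsingleton.elim _ _, Subsingleton.elim _ _⟩
  -- spectrum of F lies in [-1, 1]
  have hspec : ∀ x ∈ spectrum ℝ F, x ∈ Set.Icc (-1:ℝ) 1 := by
    intro x hx
    have h1 := spectrum.norm_le_norm_of_mem hx
    have h2 : |x| ≤ 1 := le_trans (by simpa using h1) hFnorm
    exact ⟨by linarith [neg_abs_le x], by linarith [le_abs_self x]⟩
  -- the candidate square root as a cfc of F
  set g : ℝ → ℝ := fun x => Real.sqrt (1 - x ^ 2) with hg
  set s' : A := cfc g F with hs'
  have hs'nonneg : 0 ≤ s' := cfc_nonneg fun x _ => Real.sqrt_nonneg _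
  have hkey : cfc (fun x : ℝ => 1 - x ^ 2) F = 1 - F ^ 2 := by
    rw [cfc_sub _ _ F]
    rw [cfc_pow_id F 2, cfc_const_one ℝ F]
  have hs'sq : s' * s' = 1 - F ^ 2 := by
    rw [hs', ← cfc_mul g g F, ← hkey]
    refine cfc_congr fun x hx => ?_
    have hx' := hspec x hx
    simp only [hg]
    exact Real.mul_self_sqrt (by nlinarith [hx'.1, hx'.2])
  -- positivity of 1 - F²
  have hpos : 0 ≤ 1 - F ^ 2 := by
    have h := star_mul_self_nonneg s'
    rwa [hs'nonneg.isSelfAdjoint.star_eq, hs'sq] at h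
  -- s = s'
  have hss' : s = s' := by rw [hs]; exact CFC.sqrt_unique hs'sq hs'nonneg
  have hssq : s * s = 1 - F ^ 2 := by rw [hss']; exact hs'sq
  have hsnonneg : 0 ≤ s := hss' ▸ hs'nonneg
  have hssa : IsSelfAdjoint s := hsnonneg.isSelfAdjoint
  -- F commutes with s
  have hFs : s * F = F * s := by
    have h := cfc_commute_cfc (id : ℝ → ℝ) g F
    rw [cfc_id ℝ F, ← hs'] at h
    rw [hss']
    exact h.symm.eq
  -- generalized rewriting lemmas for γ and F
  have hγF' : ∀ x : A, γ * (F * x) = -(F * (γ * x)) := fun x => by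
    rw [← mul_assoc, hanti, neg_mul, mul_assoc]
  have hsF' : ∀ x : A, s * (F * x) = F * (s * x) := fun x => by
    rw [← mul_assoc, hFs, mul_assoc]
  have hγγ : γ * γ = 1 := by rw [← sq]; exact hγ2
  have hγγ' : ∀ x : A, γ * (γ * x) = x := fun x => by
    rw [← mul_assoc, hγγ, one_mul]
  have hγF2 : γ * F ^ 2 = F ^ 2 * γ := by
    calc γ * F ^ 2 = γ * (F * F) := by rw [sq]
      _ = -(F * (γ * F)) := hγF' F
      _ = F ^ 2 * γ := by rw [hanti, mul_neg, neg_neg, sq, mul_assoc]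
  -- γ commutes with s
  have hconj : (γ * s * γ) * (γ * s * γ) = 1 - F ^ 2 := by
    calc (γ * s * γ) * (γ * s * γ) = γ * s * (γ * γ) * s * γ := by noncomm_ring
      _ = γ * (s * s) * γ := by rw [hγγ]; noncomm_ring
      _ = γ * (1 - F ^ 2) * γ := by rw [hssq]
      _ = (1 - F ^ 2) * (γ * γ) := by
          rw [mul_sub, sub_mul, mul_one, hγF2, sub_mul, mul_assoc, one_mul]
      _ = 1 - F ^ 2 := by rw [hγγ, mul_one]
  have hconjnonneg : 0 ≤ γ * s * γ := by
    have h := star_left_conjugate_nonneg hsnonneg γ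
    rwa [hγ.star_eq] at h
  have hγsγ : γ * s * γ = s := by
    have h := CFC.sqrt_unique hconj hconjnonneg
    rw [← hs] at h
    exact h.symm
  have hsγ : s * γ = γ * s := by
    calc s * γ = (γ * γ) * s * γ := by rw [hγγ, one_mul]
      _ = γ * (γ * s * γ) := by noncomm_ring
      _ = γ * s := by rw [hγsγ]
  have hsγ' : ∀ x : A, s * (γ * x) = γ * (s * x) := fun x => by
    rw [← mul_assoc, hsγ, mul_assoc]
  -- selfadjointness of U
  have hUsa : IsSelfAdjoint (F + γ * s) := by
    rw [IsSelfAdjoint, star_add, hF.star_eq, star_mul, hssa.star_eq, hγ.star_eq, hsγ]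
  -- U² = 1
  have hU2 : (F + γ * s) ^ 2 = 1 := by
    rw [sq]
    calc (F + γ * s) * (F + γ * s)
        = F * F + F * (γ * s) + (γ * (s * F) + γ * (s * (γ * s))) := by noncomm_ring
      _ = 1 := by
          rw [hFs, hsγ', hγF', hγγ', hssq]
          noncomm_ring
  have hUU' : ∀ x : A, (F + γ * s) * ((F + γ * s) * x) = x := fun x => by
    rw [← mul_assoc, ← sq, hU2, one_mul]
  -- the conjugation formula
  have hmain : (F + γ * s) * ((2:ℝ)⁻¹ • (1 + γ)) * (F + γ * s)
      = γ * (1 - F ^ 2) + F * s + (2:ℝ)⁻¹ • (1 - γ) := by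
    have hexp : (F + γ * s) * (1 + γ) * (F + γ * s)
        = (2:ℝ) • (γ * (1 - F ^ 2) + F * s) + (1 - γ) := by
      have h1 : (F + γ * s) * (1 + γ) * (F + γ * s)
          = (F + γ * s) * (F + γ * s) + (F * (γ * F) + F * (γ * (γ * s))
              + γ * (s * (γ * F)) + γ * (s * (γ * (γ * s)))) := by noncomm_ring
      have e : F * (F * γ) = γ * (F * F) := by rw [← mul_assoc, ← sq, ← hγF2, sq]
      rw [h1, ← sq, hU2, hγγ' s, hsγ' F, hγγ' (s * F), hFs, hssq, hanti, mul_neg, e, two_smul]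
      noncomm_ring
    calc (F + γ * s) * ((2:ℝ)⁻¹ • (1 + γ)) * (F + γ * s)
        = (2:ℝ)⁻¹ • ((F + γ * s) * (1 + γ) * (F + γ * s)) := by
          rw [mul_smul_comm, smul_mul_assoc]
      _ = (2:ℝ)⁻¹ • ((2:ℝ) • (γ * (1 - F ^ 2) + F * s) + (1 - γ)) := by rw [hexp]
      _ = γ * (1 - F ^ 2) + F * s + (2:ℝ)⁻¹ • (1 - γ) := by
          rw [smul_add, smul_smul]
          norm_num
  -- properties of P
  have hPsa : IsSelfAdjoint ((2:ℝ)⁻¹ • (1 + γ) : A) := by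
    rw [IsSelfAdjoint, star_smul, star_add, star_one, hγ.star_eq]
    simp
  have hPP : ((2:ℝ)⁻¹ • (1 + γ) : A) * ((2:ℝ)⁻¹ • (1 + γ)) = (2:ℝ)⁻¹ • (1 + γ) := by
    rw [smul_mul_assoc, mul_smul_comm, smul_smul]
    have h2 : ((1:A) + γ) * (1 + γ) = (2:ℝ) • (1 + γ) := by
      rw [two_smul, add_mul, one_mul, mul_add, mul_one, hγγ]
      abel
    rw [h2, smul_smul]
    norm_num
  have hPP' : ∀ x : A, ((2:ℝ)⁻¹ • (1 + γ) : A) * (((2:ℝ)⁻¹ • (1 + γ) : A) * x)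
      = ((2:ℝ)⁻¹ • (1 + γ) : A) * x := fun x => by rw [← mul_assoc, hPP]
  have hQsa : IsSelfAdjoint (γ * (1 - F ^ 2) + F * s + (2:ℝ)⁻¹ • (1 - γ)) := by
    rw [← hmain, IsSelfAdjoint, star_mul, star_mul, hUsa.star_eq, hPsa.star_eq, ← mul_assoc]
  refine ⟨hpos, hUsa, hU2, hmain, hQsa, ?_⟩
  rw [IsIdempotentElem, ← hmain]
  calc ((F + γ * s) * ((2:ℝ)⁻¹ • (1 + γ)) * (F + γ * s))
        * ((F + γ * s) * ((2:ℝ)⁻¹ • (1 + γ)) * (F + γ * s))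
      = (F + γ * s) * (((2:ℝ)⁻¹ • (1 + γ)) * ((F + γ * s) * ((F + γ * s)
          * (((2:ℝ)⁻¹ • (1 + γ)) * (F + γ * s))))) := by simp only [mul_assoc]
    _ = (F + γ * s) * (((2:ℝ)⁻¹ • (1 + γ)) * (((2:ℝ)⁻¹ • (1 + γ)) * (F + γ * s))) := by
        rw [hUU']
    _ = (F + γ * s) * (((2:ℝ)⁻¹ • (1 + γ)) * (F + γ * s)) := by rw [hPP']
    _ = (F + γ * s) * ((2:ℝ)⁻¹ • (1 + γ)) * (F + γ * s) := by rw [mul_assoc]
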